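/- arXiv:2403.09994 — 2 statements merged into one kernel-verified Lean document; each statement's English description precedes it below -/
import Mathlib

section
/- Let m and q be natural numbers with q > 3m and q > 10. Let I be the finite index type Fin(2^m), let B be a subset of I, and let a, b : I → ℝ satisfy 0 ≤ a(i) ≤ 1 and 0 ≤ b(i) ≤ 1 for all i. Assume: (i) a(i) ≤ 2^(−q) for every i ∈ B; (ii) b(i) ≥ 9/10 for every i ∉ B; (iii) there exists j ∉ B with a(j) ≥ (9/20)·(1 − 2^(−q)). Then (∑_{i ∈ I} b(i)·a(i)) / (∑_{i ∈ I} a(i)) > 0.73. -/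
open Finset

/-- Abstract YES-case analysis in the proof that YQP* ⊆ APP. -/
theorem yqp_app_yes_case (m q : ℕ) (hq3m : q > 3 * m) (hq10 : q > 10)
    (B : Finset (Fin (2 ^ m))) (a b : Fin (2 ^ m) → ℝ)
    (ha : ∀ i, 0 ≤ a i ∧ a i ≤ 1) (hb : ∀ i, 0 ≤ b i ∧ b i ≤ 1)
    (hbad : ∀ i ∈ B, a i ≤ (2 : ℝ) ^ (-(q : ℤ)))
    (hgoodb : ∀ i ∉ B, b i ≥ 9 / 10)
    (hstar : ∃ j ∉ B, a j ≥ (9 / 20) * (1 - (2 : ℝ) ^ (-(q : ℤ)))) :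
    (∑ i, b i * a i) / (∑ i, a i) > 0.73 := by
  obtain ⟨j, hjB, hja⟩ := hstar
  set εq : ℝ := (2 : ℝ) ^ (-(q : ℤ)) with hεq_def
  have hεq11 : εq ≤ (2 : ℝ) ^ (-11 : ℤ) := by
    apply zpow_le_zpow_right₀ (by norm_num)
    omega
  have h11 : ((2 : ℝ) ^ (-11 : ℤ)) = 1 / 2048 := by norm_num
  -- bad-part bound
  have hcard : (B.card : ℝ) ≤ (2 : ℝ) ^ (m : ℤ) := by
    have := Finset.card_le_univ B
    have h2 : (Finset.univ : Finset (Fin (2 ^ m))).card = 2 ^ m := by simp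
    have : (B.card : ℝ) ≤ (2 ^ m : ℕ) := by exact_mod_cast this.trans_eq h2
    simpa [zpow_natCast] using this
  have hBsum : ∑ i ∈ B, a i ≤ (1 : ℝ) / 256 := by
    calc ∑ i ∈ B, a i ≤ B.card • εq := Finset.sum_le_card_nsmul _ _ _ (fun i hi => hbad i hi)
      _ = (B.card : ℝ) * εq := by simp [nsmul_eq_mul]
      _ ≤ (2 : ℝ) ^ (m : ℤ) * (2 : ℝ) ^ (-(q : ℤ)) := by
          apply mul_le_mul hcard le_rfl (le_of_lt (by positivity)) (by positivity)
      _ = (2 : ℝ) ^ ((m : ℤ) - q) := by rw [← zpow_add₀ (by norm_num : (2:ℝ) ≠ 0)]; ring_nf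
      _ ≤ (2 : ℝ) ^ (-8 : ℤ) := by
          apply zpow_le_zpow_right₀ (by norm_num)
          omega
      _ = 1 / 256 := by norm_num
  have hBsum0 : (0 : ℝ) ≤ ∑ i ∈ B, a i := Finset.sum_nonneg fun i _ => (ha i).1
  -- good part
  set AG : ℝ := ∑ i ∈ Bᶜ, a i with hAG_def
  have hAGlb : AG ≥ (9 / 20) * (1 - 1 / 2048) := by
    have hj' : j ∈ Bᶜ := Finset.mem_compl.2 hjB
    have h1 : a j ≤ AG := Finset.single_le_sum (fun i _ => (ha i).1) hj'
    have hε : εq ≤ 1 / 2048 := h11 ▸ hεq11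
    have h2 : (9 / 20 : ℝ) * (1 - 1 / 2048) ≤ (9 / 20) * (1 - εq) := by
      nlinarith [hε]
    linarith
  have hnum : ∑ i, b i * a i ≥ (9 / 10) * AG := by
    have h1 : ∑ i ∈ Bᶜ, (9 / 10 : ℝ) * a i ≤ ∑ i ∈ Bᶜ, b i * a i := by
      apply Finset.sum_le_sum
      intro i hi
      have := hgoodb i (Finset.mem_compl.1 hi)
      nlinarith [(ha i).1, (ha i).2]
    have h2 : ∑ i ∈ Bᶜ, b i * a i ≤ ∑ i, b i * a i := by
      apply Finset.sum_le_sum_of_subset_of_nonneg (Finset.subset_univ _)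
      intro i _ _
      exact mul_nonneg (hb i).1 (ha i).1
    rw [← Finset.mul_sum] at h1
    linarith
  have hsplit : ∑ i, a i = ∑ i ∈ B, a i + AG := (Finset.sum_add_sum_compl B a).symm
  have hSpos : 0 < ∑ i, a i := by
    rw [hsplit]; nlinarith
  rw [gt_iff_lt, lt_div_iff₀ hSpos]
  rw [hsplit]
  nlinarith
end

section
/- Let m and q be natural numbers with q > 3m and q > 10. Let I be the finite index type Fin(2^m), let B be a subset of I, and let a, b : I → ℝ satisfy 0 ≤ a(i) ≤ 1 and 0 ≤ b(i) ≤ 1 for all i. Assume: (i) a(i) ≤ 2^(−q) for every i ∈ B; (ii) b(i) ≤ 1/10 for every i ∉ B; (iii) ∑_{i ∉ B} a(i) ≥ 2^(−m)·(1 − 2^(−q)). Then (∑_{i ∈ I} b(i)·a(i)) / (∑_{i ∈ I} a(i)) < 1/5. -/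
open Finset

/-- Abstract NO-case analysis in the proof that YQP* ⊆ APP. -/
theorem yqp_app_no_case (m q : ℕ) (hq3m : q > 3 * m) (hq10 : q > 10)
    (B : Finset (Fin (2 ^ m))) (a b : Fin (2 ^ m) → ℝ)
    (ha : ∀ i, 0 ≤ a i ∧ a i ≤ 1) (hb : ∀ i, 0 ≤ b i ∧ b i ≤ 1)
    (hbad : ∀ i ∈ B, a i ≤ (2 : ℝ) ^ (-(q : ℤ)))
    (hgoodb : ∀ i ∉ B, b i ≤ 1 / 10)
    (hmass : ∑ i ∈ Bᶜ, a i ≥ (2 : ℝ) ^ (-(m : ℤ)) * (1 - (2 : ℝ) ^ (-(q : ℤ)))) :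
    (∑ i, b i * a i) / (∑ i, a i) < 1 / 5 := by
  have hq : q ≥ 2 * m + 5 := by omega
  set x : ℝ := (2:ℝ) ^ (-(m:ℤ)) with hx
  set y : ℝ := (2:ℝ) ^ (-(q:ℤ)) with hy
  have hxpos : 0 < x := by positivity
  have hy1 : y ≤ 1/2 := by
    calc y = (2:ℝ) ^ (-(q:ℤ)) := hy
      _ ≤ (2:ℝ) ^ (-1:ℤ) := zpow_le_zpow_right₀ one_le_two (by omega)
      _ = 1/2 := by norm_num
  set SB : ℝ := ∑ i ∈ B, a i with hSB
  set T : ℝ := ∑ i ∈ Bᶜ, a i with hT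
  have hSBnn : 0 ≤ SB := Finset.sum_nonneg fun i _ => (ha i).1
  have hcard : (B.card : ℝ) ≤ (2:ℝ) ^ (m:ℤ) := by
    calc (B.card : ℝ) ≤ ((2 ^ m : ℕ) : ℝ) := by
          exact_mod_cast B.card_le_univ.trans_eq (by simp)
      _ = (2:ℝ) ^ (m:ℤ) := by push_cast; simp
  have hSBle : SB ≤ x / 32 := by
    calc SB ≤ ∑ _i ∈ B, y := Finset.sum_le_sum hbad
      _ = (B.card : ℝ) * y := by rw [Finset.sum_const, nsmul_eq_mul]
      _ ≤ (2:ℝ) ^ (m:ℤ) * y := mul_le_mul_of_nonneg_right hcard (by positivity)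
      _ = (2:ℝ) ^ ((m:ℤ) - q) := by
          rw [hy, ← zpow_add₀ (by norm_num : (2:ℝ) ≠ 0)]; ring_nf
      _ ≤ (2:ℝ) ^ (-(m:ℤ) - 5) := zpow_le_zpow_right₀ one_le_two (by omega)
      _ = x / 32 := by
          rw [hx, zpow_sub₀ (by norm_num : (2:ℝ) ≠ 0)]
          norm_num
  have hTge : T ≥ x / 2 := by
    have hxy : x * y ≤ x * (1/2) := mul_le_mul_of_nonneg_left hy1 hxpos.le
    nlinarith [hmass]
  have hTpos : 0 < T := lt_of_lt_of_le (by positivity) hTge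
  have hS : (∑ i, a i) = SB + T := (Finset.sum_add_sum_compl B a).symm
  have hSpos : 0 < ∑ i, a i := by rw [hS]; linarith
  have hN : (∑ i, b i * a i) ≤ SB + T / 10 := by
    have h1 : ∑ i ∈ B, b i * a i ≤ SB := by
      apply Finset.sum_le_sum
      intro i _
      nlinarith [(ha i).1, (hb i).2]
    have h2 : ∑ i ∈ Bᶜ, b i * a i ≤ T / 10 := by
      have h3 : ∑ i ∈ Bᶜ, b i * a i ≤ ∑ i ∈ Bᶜ, (1/10) * a i := by
        apply Finset.sum_le_sum
        intro i hi
        have hib : i ∉ B := Finset.mem_compl.mp hi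
        nlinarith [(ha i).1, hgoodb i hib]
      calc ∑ i ∈ Bᶜ, b i * a i ≤ ∑ i ∈ Bᶜ, (1/10) * a i := h3
        _ = (1/10) * T := by rw [hT, Finset.mul_sum]
        _ = T / 10 := by ring
    have h4 := (Finset.sum_add_sum_compl B fun i => b i * a i).symm
    calc (∑ i, b i * a i) = (∑ i ∈ B, b i * a i) + ∑ i ∈ Bᶜ, b i * a i := h4
      _ ≤ SB + T / 10 := add_le_add h1 h2
  rw [div_lt_iff₀ hSpos, hS]
  nlinarith
end
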